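/- Let (G₁,Σ₁),...,(G_k,Σ_k) be game-strategy pairs and let (G_p, Σ_p) be their product, where each player's action set in G_p is the Cartesian product of its action sets in the G_θ and its utility is the sum of its utilities over the factor games. Under any coalition structure S*, the product default profile Σ_p is a Nash equilibrium of G_p if and only if for every θ ∈ {1,...,k}, Σ_θ is a Nash equilibrium of G_θ under S*. -/
import Mathlib


noncomputable section
open Classical

/-- A profile `σ` is a Nash equilibrium of the game with (dependent) action sets `A`
and utilities `u` under the coalition structure `S` if no block can strictly increase
its total utility by a unilateral joint deviation of its members. -/
def CoalitionNash {n : ℕ} {A : Fin n → Type*} (S : Setoid (Fin n))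
    (u : Fin n → ((j : Fin n) → A j) → ℝ) (σ : (j : Fin n) → A j) : Prop :=
  ∀ i : Fin n, ∀ σ' : (j : Fin n) → A j,
    (∀ j, ¬ S.r i j → σ' j = σ j) →
    (∑ j : Fin n, if S.r i j then u j σ' else 0) ≤
      ∑ j : Fin n, if S.r i j then u j σ else 0

lemma sum_ite_swap {n k : ℕ} (P : Fin n → Prop) [DecidablePred P]
    (f : Fin k → Fin n → ℝ) :
    (∑ j : Fin n, if P j then ∑ θ : Fin k, f θ j else 0) =
      ∑ θ : Fin k, ∑ j : Fin n, if P j then f θ j else 0 := by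
  rw [Finset.sum_comm]
  refine Finset.sum_congr rfl fun j _ => ?_
  by_cases h : P j <;> simp [h]

/-- Let `(G₁,Σ₁),…,(G_k,Σ_k)` be game-strategy pairs, with player `i`'s action set in
game `θ` being `A θ i` and utility `u θ i`. In the product game, each player's action
set is the product of its factor action sets and its utility is the sum of its factor
utilities; the product default profile is the tuple of factor default profiles.
Under any coalition structure `S`, the product default profile is a Nash equilibrium
of the product game iff for every `θ`, `Σ_θ` is a Nash equilibrium of `G_θ`. -/
theorem product_default_nash_iff {n k : ℕ} {A : Fin k → Fin n → Type*}
    (S : Setoid (Fin n))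
    (u : (θ : Fin k) → Fin n → (((j : Fin n) → A θ j) → ℝ))
    (Ds : (θ : Fin k) → (j : Fin n) → A θ j) :
    CoalitionNash (A := fun j => (θ : Fin k) → A θ j) S
        (fun i σ => ∑ θ : Fin k, u θ i (fun j => σ j θ))
        (fun j θ => Ds θ j) ↔
      ∀ θ : Fin k, CoalitionNash S (u θ) (Ds θ) := by
  constructor
  · intro h θ₀ i σ' hσ'
    -- build product deviation changing only coordinate θ₀
    set τ : (j : Fin n) → (θ : Fin k) → A θ j :=
      fun j θ => if hθ : θ = θ₀ then (hθ ▸ σ' j) else Ds θ j with hτ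
    have hcond : ∀ j, ¬ S.r i j → τ j = fun θ => Ds θ j := by
      intro j hj
      funext θ
      by_cases hθ : θ = θ₀
      · subst hθ; simp [hτ, hσ' j hj]
      · simp [hτ, hθ]
    have key := h i τ hcond
    have hτne : ∀ θ, θ ≠ θ₀ → (fun j => τ j θ) = Ds θ := by
      intro θ hθ; funext j; simp [hτ, hθ]
    have hθ0 : (fun j => τ j θ₀) = σ' := by funext j; simp [hτ]
    rw [sum_ite_swap, sum_ite_swap] at key
    have key2 : ∀ θ, θ ≠ θ₀ →
        (∑ j : Fin n, if S.r i j then u θ j (fun j' => τ j' θ) else 0) =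
          ∑ j : Fin n, if S.r i j then u θ j (Ds θ) else 0 := by
      intro θ hθ
      rw [hτne θ hθ]
    calc (∑ j : Fin n, if S.r i j then u θ₀ j σ' else 0)
        = (∑ θ : Fin k, ∑ j : Fin n, if S.r i j then u θ j (fun j' => τ j' θ) else 0)
          - ∑ θ ∈ Finset.univ.erase θ₀, ∑ j : Fin n, if S.r i j then u θ j (Ds θ) else 0 := by
          rw [← Finset.add_sum_erase _ _ (Finset.mem_univ θ₀), hθ0]
          rw [Finset.sum_congr rfl (fun θ hθ => key2 θ (Finset.ne_of_mem_erase hθ))]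
          ring
      _ ≤ (∑ θ : Fin k, ∑ j : Fin n, if S.r i j then u θ j (Ds θ) else 0)
          - ∑ θ ∈ Finset.univ.erase θ₀, ∑ j : Fin n, if S.r i j then u θ j (Ds θ) else 0 := by
          linarith
      _ = ∑ j : Fin n, if S.r i j then u θ₀ j (Ds θ₀) else 0 := by
          rw [← Finset.add_sum_erase _ _ (Finset.mem_univ θ₀)]
          ring
  · intro h i σ' hσ'
    rw [sum_ite_swap, sum_ite_swap]
    refine Finset.sum_le_sum fun θ _ => ?_
    exact h θ i (fun j => σ' j θ) (fun j hj => congrFun (hσ' j hj) θ)
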